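/- (Stone–von Neumann theorem for finite Heisenberg-type groups) Let H be a finite group with center Z, such that [H,H] ⊆ Z, and let χ : Z → ℂ^× be a character such that the induced pairing H/Z × H/Z → ℂ^×, (xZ, yZ) ↦ χ([x,y]), is nondegenerate. Then up to isomorphism there is exactly one irreducible complex representation V of H on which Z acts through χ, and dim V = √([H : Z]). -/

import Mathlib

/-!
If the centre acts on `V` through `χ`, then `x = ⁅x, y⁆ · (y x y⁻¹)` shows that the character
of `V` satisfies `χ_V(x) = χ⁅x, y⁆ · χ_V(x)`, so nondegeneracy forces `χ_V` to vanish off the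
centre `Z`, while `χ_V(z) = χ(z) · dim V` on `Z`. Hence for two such representations
`∑ₕ χ_V(h) χ_W(h⁻¹) = |Z| · dim V · dim W`. Orthogonality of irreducible characters turns this
into `|Z| (dim V)² = |H|` for `W = V`, and, since the sum is nonzero, shows that two irreducible
ones are isomorphic. An irreducible one exists: a nonzero subrepresentation of minimal dimension
of the representation coinduced from `χ` is simple, and subrepresentations inherit the central
character.
-/

open CategoryTheory Module
open scoped commutatorElement

universe u v

def IsNondegenerateCommutatorPairing {G : Type v} [Group G] {M : Type*} [Monoid M]
    (χ : Subgroup.center G →* M) : Prop :=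
  ∀ x ∉ Subgroup.center G, ∃ y, ∃ h : ⁅x, y⁆ ∈ Subgroup.center G, χ ⟨_, h⟩ ≠ 1

namespace FDRep

variable {k : Type u} [Field k] {G : Type v} [Group G]

def HasCentralChar (V : FDRep k G) (χ : Subgroup.center G →* kˣ) : Prop :=
  ∀ z : Subgroup.center G, V.ρ (z : G) = (χ z : k) • (1 : V →ₗ[k] V)

namespace HasCentralChar

variable {χ : Subgroup.center G →* kˣ} {V W : FDRep k G}

theorem char_mul (hV : V.HasCentralChar χ) (z : Subgroup.center G) (g : G) :
    V.character (z * g) = χ z * V.character g := by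
  rw [character, map_mul, hV z, smul_mul_assoc, one_mul, map_smul, smul_eq_mul]
  rfl

theorem char_coe (hV : V.HasCentralChar χ) (z : Subgroup.center G) :
    V.character z = χ z * finrank k V := by
  simpa using hV.char_mul z 1

theorem char_eq_zero_of_commutator (hV : V.HasCentralChar χ) {x y : G}
    (hxy : ⁅x, y⁆ ∈ Subgroup.center G) (hχ : χ ⟨_, hxy⟩ ≠ 1) : V.character x = 0 := by
  have hconj := hV.char_mul ⟨_, hxy⟩ (y * x * y⁻¹)
  rw [char_conj, show ⁅x, y⁆ * (y * x * y⁻¹) = x by rw [commutatorElement_def]; group] at hconj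
  have hχ' : (χ ⟨_, hxy⟩ : k) ≠ 1 := by rwa [Ne, Units.val_eq_one]
  have : ((χ ⟨_, hxy⟩ : k) - 1) * V.character x = 0 := by linear_combination -hconj
  exact (mul_eq_zero.mp this).resolve_left (sub_ne_zero.mpr hχ')

theorem char_eq_zero (hV : V.HasCentralChar χ) (hχ : IsNondegenerateCommutatorPairing χ) {x : G}
    (hx : x ∉ Subgroup.center G) : V.character x = 0 := by
  obtain ⟨y, hxy, hne⟩ := hχ x hx
  exact hV.char_eq_zero_of_commutator hxy hne

theorem sum_char_mul_char_inv [Fintype G] (hχ : IsNondegenerateCommutatorPairing χ)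
    (hV : V.HasCentralChar χ) (hW : W.HasCentralChar χ) :
    ∑ g : G, V.character g * W.character g⁻¹ =
      Nat.card (Subgroup.center G) * (finrank k V * finrank k W) := by
  classical
  have hterm : ∀ g : G, V.character g * W.character g⁻¹ =
      if g ∈ Subgroup.center G then (finrank k V * finrank k W : k) else 0 := by
    intro g
    split_ifs with hg
    · rw [← Subgroup.coe_mk _ g hg, ← Subgroup.coe_inv, hV.char_coe, hW.char_coe, map_inv]
      calc _ = ((χ ⟨g, hg⟩ * (χ ⟨g, hg⟩)⁻¹ : kˣ) : k) * (finrank k V * finrank k W) := by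
              push_cast; ring
        _ = _ := by rw [mul_inv_cancel, Units.val_one, one_mul]
    · rw [hV.char_eq_zero hχ hg, zero_mul]
  rw [Finset.sum_congr rfl fun g _ => hterm g, ← Finset.sum_filter, Finset.sum_const,
    nsmul_eq_mul, Nat.card_eq_fintype_card, Fintype.card_subtype]

variable [IsAlgClosed k] [CharZero k] [Fintype G]

open scoped Classical in
theorem card_center_mul_finrank_mul_finrank [Simple V] [Simple W]
    (hχ : IsNondegenerateCommutatorPairing χ) (hV : V.HasCentralChar χ)
    (hW : W.HasCentralChar χ) :
    Nat.card (Subgroup.center G) * (finrank k V * finrank k W) =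
      if Nonempty (V ≅ W) then Nat.card G else 0 := by
  have : Invertible (Nat.card G : k) := invertibleOfNonzero (NeZero.ne _)
  have horth := char_orthonormal V W
  rw [sum_char_mul_char_inv hχ hV hW, inv_mul_eq_iff_eq_mul₀ (NeZero.ne _)] at horth
  split_ifs at horth ⊢
  · exact_mod_cast horth.trans (mul_one _)
  · exact_mod_cast horth.trans (mul_zero _)

theorem finrank_sq [Simple V] (hχ : IsNondegenerateCommutatorPairing χ)
    (hV : V.HasCentralChar χ) : finrank k V ^ 2 = (Subgroup.center G).index := by
  have h := card_center_mul_finrank_mul_finrank hχ hV hV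
  rw [if_pos ⟨Iso.refl V⟩, ← (Subgroup.center G).card_mul_index] at h
  rw [sq]
  exact Nat.eq_of_mul_eq_mul_left Nat.card_pos h

theorem finrank_pos [Simple V] (hχ : IsNondegenerateCommutatorPairing χ)
    (hV : V.HasCentralChar χ) : 0 < finrank k V :=
  Nat.pos_of_ne_zero fun h0 => Subgroup.index_ne_zero_of_finite (by
    rw [← hV.finrank_sq hχ, h0, zero_pow two_ne_zero])

theorem nonempty_iso [Simple V] [Simple W] (hχ : IsNondegenerateCommutatorPairing χ)
    (hV : V.HasCentralChar χ) (hW : W.HasCentralChar χ) : Nonempty (V ≅ W) := by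
  by_contra hVW
  have h := card_center_mul_finrank_mul_finrank hχ hV hW
  rw [if_neg hVW] at h
  exact (Nat.mul_pos Nat.card_pos (Nat.mul_pos (hV.finrank_pos hχ) (hW.finrank_pos hχ))).ne' h

end HasCentralChar

theorem injective_hom_of_mono {X Y : FDRep k G} (f : Y ⟶ X) [Mono f] :
    Function.Injective f.hom.hom :=
  (Rep.mono_iff_injective ((forget₂ (FDRep k G) (Rep k G)).map f)).1 inferInstance

theorem isIso_of_bijective_hom {X Y : FDRep k G} (f : Y ⟶ X)
    (hf : Function.Bijective f.hom.hom) : IsIso f :=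
  have : IsIso ((forget (FDRep k G)).map f) := (isIso_iff_bijective _).2 hf
  isIso_of_reflects_iso f (forget (FDRep k G))

theorem eq_zero_of_finrank_eq_zero {X Y : FDRep k G} (f : Y ⟶ X) (hY : finrank k Y = 0) :
    f = 0 := by
  have : Subsingleton Y := Module.finrank_zero_iff.mp hY
  ext y
  simp [Subsingleton.elim y 0]

theorem simple_of_minimal_finrank {P : FDRep k G → Prop}
    (hP : ∀ {X Y : FDRep k G} (f : Y ⟶ X) [Mono f], P X → P Y) {X : FDRep k G} (hX : P X)
    (hpos : 0 < finrank k X)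
    (hmin : ∀ Y : FDRep k G, P Y → 0 < finrank k Y → finrank k X ≤ finrank k Y) :
    Simple X where
  mono_isIso_iff_nonzero {Y} f _ := by
    have hinj := injective_hom_of_mono f
    constructor
    · rintro hiso rfl
      have hY : finrank k Y = 0 := by
        rw [Module.finrank_zero_iff]
        exact ⟨fun a b => hinj (by simp)⟩
      have := (isoToLinearEquiv (asIso (0 : Y ⟶ X))).finrank_eq
      omega
    · intro hf
      have hYpos : 0 < finrank k Y :=
        Nat.pos_of_ne_zero fun hY => hf (eq_zero_of_finrank_eq_zero f hY)
      have hYX : finrank k Y = finrank k X :=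
        le_antisymm (LinearMap.finrank_le_finrank_of_injective hinj) (hmin Y (hP f hX) hYpos)
      exact isIso_of_bijective_hom f
        ⟨hinj, (LinearMap.injective_iff_surjective_of_finrank_eq_finrank hYX).1 hinj⟩

theorem exists_simple_of_finrank_pos {P : FDRep k G → Prop}
    (hP : ∀ {X Y : FDRep k G} (f : Y ⟶ X) [Mono f], P X → P Y) {X : FDRep k G} (hX : P X)
    (hpos : 0 < finrank k X) : ∃ V : FDRep k G, Simple V ∧ P V := by
  classical
  have hex : ∃ n, ∃ Y : FDRep k G, P Y ∧ 0 < finrank k Y ∧ finrank k Y = n :=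
    ⟨_, X, hX, hpos, rfl⟩
  obtain ⟨V, hV, hVpos, hVn⟩ := Nat.find_spec hex
  refine ⟨V, simple_of_minimal_finrank hP hV hVpos fun Y hY hYpos => ?_, hV⟩
  exact hVn ▸ Nat.find_min' hex ⟨Y, hY, hYpos, rfl⟩

theorem HasCentralChar.of_mono {χ : Subgroup.center G →* kˣ} {X Y : FDRep k G} (f : Y ⟶ X)
    [Mono f] (hX : X.HasCentralChar χ) : Y.HasCentralChar χ := by
  intro z
  refine LinearMap.ext fun y => injective_hom_of_mono f ?_
  have hf := Rep.hom_comm_apply ((forget₂ (FDRep k G) (Rep k G)).map f) (z : G) y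
  change f.hom.hom (Y.ρ z y) = X.ρ z (f.hom.hom y) at hf
  rw [hf, hX z]
  simp

end FDRep

def Representation.ofCharacter {k G : Type*} [CommSemiring k] [Monoid G] (χ : G →* kˣ) :
    Representation k G k :=
  (Algebra.lmul k k).toMonoidHom.comp ((Units.coeHom k).comp χ)

@[simp]
theorem Representation.ofCharacter_apply {k G : Type*} [CommSemiring k] [Monoid G]
    (χ : G →* kˣ) (g : G) (a : k) : Representation.ofCharacter χ g a = χ g * a :=
  rfl

namespace FDRep

variable {k : Type u} [Field k] {G : Type u} [Group G] [Finite G] (χ : Subgroup.center G →* kˣ)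

noncomputable def coindCenter : FDRep k G :=
  FDRep.of (Representation.coind (Subgroup.center G).subtype (Representation.ofCharacter χ))

theorem coindCenter_hasCentralChar : (coindCenter χ).HasCentralChar χ := by
  intro z
  refine LinearMap.ext fun f => Subtype.ext (funext fun x => ?_)
  have hf := f.2 z x
  simp only [Subgroup.subtype_apply, Representation.ofCharacter_apply] at hf
  change f.1 (x * z) = χ z * f.1 x
  rw [← hf, Subgroup.mem_center_iff.mp z.2 x]

theorem finrank_coindCenter_pos : 0 < finrank k (coindCenter χ) := by
  classical
  let f₀ : G → k := fun g => if hg : g ∈ Subgroup.center G then χ ⟨g, hg⟩ else 0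
  have hf₀ :
      f₀ ∈ Representation.coindV (Subgroup.center G).subtype (Representation.ofCharacter χ) := by
    intro z g
    by_cases hg : g ∈ Subgroup.center G
    · simp only [f₀, dif_pos hg, dif_pos (mul_mem z.2 hg), Subgroup.subtype_apply,
        Representation.ofCharacter_apply]
      rw [← Units.val_mul, ← map_mul]
      rfl
    · have hzg : (z : G) * g ∉ Subgroup.center G := fun h =>
        hg (by simpa using mul_mem (inv_mem z.2) h)
      simp [f₀, hg, hzg]
  have hne : (⟨f₀, hf₀⟩ : coindCenter χ) ≠ 0 := fun h => by
    simpa [f₀] using congrFun (congrArg Subtype.val h) 1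
  exact Module.finrank_pos_iff_exists_ne_zero.2 ⟨_, hne⟩

end FDRep

open FDRep

/-- Stone–von Neumann for finite Heisenberg-type groups: if `H` is a finite group with
center `Z`, `[H,H] ⊆ Z`, and `χ : Z → ℂˣ` is a character for which the commutator pairing
`(x, y) ↦ χ(⁅x,y⁆)` on `H/Z` is nondegenerate, then up to isomorphism there is exactly one
irreducible complex representation of `H` on which `Z` acts through `χ`, and its dimension
squared equals the index `[H : Z]`. -/
theorem stmt_3 (H : Type) [Group H] [Fintype H]
    (hc : ∀ x y : H, ⁅x, y⁆ ∈ Subgroup.center H)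
    (χ : Subgroup.center H →* ℂˣ)
    (hnd : ∀ x : H, x ∉ Subgroup.center H → ∃ y : H, χ ⟨⁅x, y⁆, hc x y⟩ ≠ 1) :
    ∃ V : FDRep ℂ H, Simple V ∧
      (∀ z : Subgroup.center H, V.ρ (z : H) = (χ z : ℂ) • (1 : V →ₗ[ℂ] V)) ∧
      (Module.finrank ℂ V) ^ 2 = (Subgroup.center H).index ∧
      ∀ W : FDRep ℂ H, Simple W →
        (∀ z : Subgroup.center H, W.ρ (z : H) = (χ z : ℂ) • (1 : W →ₗ[ℂ] W)) →
        Nonempty (V ≅ W) := by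
  have hχ : IsNondegenerateCommutatorPairing χ := fun x hx =>
    let ⟨y, hy⟩ := hnd x hx
    ⟨y, hc x y, hy⟩
  obtain ⟨V, hVs, hV⟩ := exists_simple_of_finrank_pos (P := (·.HasCentralChar χ))
    (fun f _ hX => hX.of_mono f) (coindCenter_hasCentralChar χ) (finrank_coindCenter_pos χ)
  exact ⟨V, hVs, hV, hV.finrank_sq hχ, fun W _ hW => hV.nonempty_iso hχ hW⟩
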